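/- For every $q^0 \in [0,\infty)^V$ there exists a solution of the complete-graph initial value problem with initial condition $q^0$; that is, a continuous $f:[0,\infty)\to[0,\infty)^V$ with $f(0)=q^0$, $s(f(t))=\max(s(q^0)+(s(\lambda)-1)t,0)$ for all $t \ge 0$, and $f'(t)=g(f(t))$ at every $t>0$ with $f(t)\neq 0$. -/

import Mathlib

open Finset

/-- The fluid drift of QB-CSMA on a complete interference graph:
`g_v(q) = λ_v - q_v^a / ∑_w q_w^a`. -/
noncomputable def gdrift {V : Type*} [Fintype V] (a : ℝ) (lam : V → ℝ) (q : V → ℝ) :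
    V → ℝ :=
  fun v => lam v - q v ^ a / ∑ w, q w ^ a

/-- A solution of the complete-graph initial value problem with initial condition `q⁰`:
a continuous `f : [0,∞) → [0,∞)^V` with `f(0) = q⁰`, whose sum of coordinates is
`max(s(q⁰) + (s(λ)-1) t, 0)`, and which satisfies `f'(t) = g(f(t))` at every `t > 0`
with `f(t) ≠ 0`. -/
def IsCGSolution {V : Type*} [Fintype V] (a : ℝ) (lam : V → ℝ) (q0 : V → ℝ)
    (f : ℝ → V → ℝ) : Prop :=
  ContinuousOn f (Set.Ici 0) ∧ f 0 = q0 ∧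
    (∀ t, 0 ≤ t → ∀ v, 0 ≤ f t v) ∧
    (∀ t, 0 ≤ t → ∑ v, f t v = max ((∑ v, q0 v) + ((∑ v, lam v) - 1) * t) 0) ∧
    (∀ t, 0 < t → f t ≠ 0 → HasDerivAt f (gdrift a lam (f t)) t)

/-- `τ⁰(f) = inf {t > 0 : min_v f_v(t) ≤ 0}`, with the convention `inf ∅ = +∞`
(realized by taking the infimum in the extended reals). -/
noncomputable def tau0 {V : Type*} (f : ℝ → V → ℝ) : EReal :=
  sInf ((fun t : ℝ => (t : EReal)) '' {t : ℝ | 0 < t ∧ ∃ v, f t v ≤ 0})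

/-!
If `∑ q⁰ > 0`, the drift is singular only where coordinates vanish, and `λ_v > 0` keeps them away
from `0`: a coordinate lying on the barrier `b(t) = κ (1 - e^{-t}) m(t)`, where `m(t)` is the total
mass, receives drift at least `λ_v / 2`, which exceeds the slope of `b` when `κ` is small. So we
first solve the ODE whose state is clamped into the tube between `max (b, q⁰_v + (λ_v - 1) t)` and
`q⁰_v + λ_v t`. On `[0, T]`, as long as `m(T) > 0`, its drift is Lipschitz in the state with a
modulus `L(t) = O(t^{a-1} + 1)`, integrable at `0`, so the `n`-th iterate of the Picard map
contracts with constant `(∫₀ᵀ L)^n / n!` for large `n`. Comparison with the barrier shows that the solution never touches the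
clamp, and by uniqueness the solutions on growing horizons glue; once the mass has reached `0` the
solution stays at `0`.

If `q⁰ = 0`, the solution is `0` when `∑ λ ≤ 1`, and otherwise the ray `t ↦ t c` where `g(c) = c`:
such a `c` is given by `c_v + c_v^a / K = λ_v`, with `K` chosen by the intermediate value theorem so
that `∑ c = ∑ λ - 1`, which forces `∑ c^a = K`.
-/

open Set Filter Topology MeasureTheory intervalIntegral Function
open scoped Nat NNReal

section Picard

variable {E : Type*} [NormedAddCommGroup E] [NormedSpace ℝ E]

structure HasIntegrableLipschitzModulus (F : ℝ → E → E) (L : ℝ → ℝ) (T : ℝ) : Prop where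
  continuousOn : ContinuousOn (uncurry F) (Icc 0 T ×ˢ univ)
  intervalIntegrable : IntervalIntegrable L volume 0 T
  continuousOn_modulus : ContinuousOn L (Ioo 0 T)
  modulus_nonneg : ∀ s ∈ Ioc 0 T, 0 ≤ L s
  dist_le : ∀ s ∈ Ioc 0 T, ∀ x y, dist (F s x) (F s y) ≤ L s * dist x y

structure SolvesIntegralEq (F : ℝ → E → E) (x₀ : E) (T : ℝ) (u : ℝ → E) : Prop where
  continuousOn : ContinuousOn u (Icc 0 T)
  eq_integral : ∀ t ∈ Icc 0 T, u t = x₀ + ∫ s in 0..t, F s (u s)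

variable {F : ℝ → E → E} {x₀ : E} {L : ℝ → ℝ} {T : ℝ}

namespace SolvesIntegralEq

variable {u : ℝ → E}

lemma mono {T' : ℝ} (hu : SolvesIntegralEq F x₀ T' u) (hT : T ≤ T') :
    SolvesIntegralEq F x₀ T u :=
  ⟨hu.continuousOn.mono (Icc_subset_Icc_right hT),
    fun t ht => hu.eq_integral t ⟨ht.1, ht.2.trans hT⟩⟩

lemma apply_zero (hu : SolvesIntegralEq F x₀ T u) (hT : 0 ≤ T) : u 0 = x₀ := by
  simpa using hu.eq_integral 0 ⟨le_rfl, hT⟩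

lemma hasDerivWithinAt [CompleteSpace E] (hu : SolvesIntegralEq F x₀ T u)
    (hF : ContinuousOn (uncurry F) (Icc 0 T ×ˢ univ)) {t : ℝ} (ht : t ∈ Icc 0 T) :
    HasDerivWithinAt u (F t (u t)) (Icc 0 T) t :=
  (ODE.hasDerivWithinAt_picard_Icc ⟨le_rfl, ht.1.trans ht.2⟩ hF hu.continuousOn
    (fun _ _ => mem_univ _) x₀ ht).congr hu.eq_integral (hu.eq_integral t ht)

end SolvesIntegralEq

lemma integral_mul_pow_primitive {t : ℝ} (ht : 0 ≤ t) (hL : IntervalIntegrable L volume 0 t)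
    (hLc : ContinuousOn L (Ioo 0 t)) (k : ℕ) :
    ∫ s in 0..t, L s * (∫ r in 0..s, L r) ^ k = (∫ r in 0..t, L r) ^ (k + 1) / (k + 1) := by
  have hΛ : ContinuousOn (fun s => ∫ r in 0..s, L r) (Icc 0 t) := by
    simpa [uIcc_of_le ht] using continuousOn_primitive_interval' hL left_mem_uIcc
  have hderiv : ∀ s ∈ Ioo 0 t, HasDerivAt (fun s => (∫ r in 0..s, L r) ^ (k + 1) / (k + 1))
      (L s * (∫ r in 0..s, L r) ^ k) s := by
    intro s hs
    have hLs := integral_hasDerivAt_right (hL.mono_set (by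
        rw [uIcc_of_le ht, uIcc_of_le hs.1.le]; exact Icc_subset_Icc_right hs.2.le))
      (hLc.stronglyMeasurableAtFilter isOpen_Ioo s hs)
      (hLc.continuousAt (isOpen_Ioo.mem_nhds hs))
    refine ((hLs.fun_pow (k + 1)).div_const ((k : ℝ) + 1)).congr_deriv ?_
    rw [Nat.add_sub_cancel]
    push_cast
    field_simp
  rw [integral_eq_sub_of_hasDerivAt_of_le ht ((hΛ.pow _).div_const _) hderiv
    (hL.mul_continuousOn (by rw [uIcc_of_le ht]; exact hΛ.pow k))]
  simp

lemma continuousOn_comp_IccExtend (hT : 0 ≤ T) (hF : ContinuousOn (uncurry F) (Icc 0 T ×ˢ univ))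
    (u : C(Icc 0 T, E)) : ContinuousOn (fun s => F s (IccExtend hT u s)) (Icc 0 T) :=
  ODE.continuousOn_comp hF u.continuous.Icc_extend'.continuousOn (mapsTo_univ _ _)

noncomputable def picardMap (hT : 0 ≤ T) (hF : ContinuousOn (uncurry F) (Icc 0 T ×ˢ univ))
    (x₀ : E) (u : C(Icc 0 T, E)) : C(Icc 0 T, E) where
  toFun t := x₀ + ∫ s in 0..t, F s (IccExtend hT u s)
  continuous_toFun := by
    have h := continuousOn_primitive_interval' (μ := volume)
      ((continuousOn_comp_IccExtend hT hF u).intervalIntegrable_of_Icc hT) left_mem_uIcc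
    rw [uIcc_of_le hT] at h
    exact continuous_const.add (h.comp_continuous continuous_subtype_val Subtype.prop)

lemma picardMap_apply (hT : 0 ≤ T) (hF : ContinuousOn (uncurry F) (Icc 0 T ×ˢ univ))
    (u : C(Icc 0 T, E)) (t : Icc 0 T) :
    picardMap hT hF x₀ u t = x₀ + ∫ s in 0..t, F s (IccExtend hT u s) := rfl

lemma dist_iterate_picardMap_apply_le (hF : HasIntegrableLipschitzModulus F L T) (hT : 0 ≤ T)
    (u w : C(Icc 0 T, E)) (k : ℕ) (t : Icc 0 T) :
    dist ((picardMap hT hF.continuousOn x₀)^[k] u t) ((picardMap hT hF.continuousOn x₀)^[k] w t)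
      ≤ (∫ r in 0..t, L r) ^ k / k ! * dist u w := by
  induction k generalizing t with
  | zero => simpa using ContinuousMap.dist_apply_le_dist t
  | succ k ih =>
    set P := picardMap hT hF.continuousOn x₀
    have ht : (0 : ℝ) ≤ t := t.2.1
    have hLt : IntervalIntegrable L volume 0 t := hF.intervalIntegrable.mono_set
      (by simpa [uIcc_of_le ht, uIcc_of_le hT] using Icc_subset_Icc_right t.2.2)
    have hΛ : ContinuousOn (fun s => ∫ r in 0..s, L r) (uIcc 0 t) :=
      continuousOn_primitive_interval' hLt left_mem_uIcc
    have hint (v : C(Icc 0 T, E)) :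
        IntervalIntegrable (fun s => F s (IccExtend hT v s)) volume 0 t :=
      ((continuousOn_comp_IccExtend hT hF.continuousOn v).mono
        (Icc_subset_Icc_right t.2.2)).intervalIntegrable_of_Icc ht
    rw [iterate_succ_apply', iterate_succ_apply', dist_eq_norm, picardMap_apply, picardMap_apply,
      add_sub_add_left_eq_sub, ← integral_sub (hint _) (hint _)]
    calc _ ≤ ∫ s in 0..t, L s * (∫ r in 0..s, L r) ^ k * (dist u w / k !) := by
          refine norm_integral_le_of_norm_le ht (ae_of_all _ fun s hs => ?_)
            ((hLt.mul_continuousOn (hΛ.pow k)).mul_const _)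
          have hsT : s ∈ Icc 0 T := ⟨hs.1.le, hs.2.trans t.2.2⟩
          rw [← dist_eq_norm, IccExtend_of_mem hT _ hsT, IccExtend_of_mem hT _ hsT]
          calc _ ≤ L s * dist ((P^[k] u) ⟨s, hsT⟩) ((P^[k] w) ⟨s, hsT⟩) :=
                hF.dist_le s ⟨hs.1, hsT.2⟩ _ _
            _ ≤ L s * ((∫ r in 0..s, L r) ^ k / k ! * dist u w) :=
                mul_le_mul_of_nonneg_left (ih ⟨s, hsT⟩) (hF.modulus_nonneg s ⟨hs.1, hsT.2⟩)
            _ = _ := by ring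
      _ = (∫ r in 0..t, L r) ^ (k + 1) / (k + 1) ! * dist u w := by
          rw [intervalIntegral.integral_mul_const, integral_mul_pow_primitive ht hLt
            (hF.continuousOn_modulus.mono (Ioo_subset_Ioo_right t.2.2)), Nat.factorial_succ]
          push_cast
          field_simp

lemma exists_contractingWith_iterate_picardMap (hF : HasIntegrableLipschitzModulus F L T)
    (hT : 0 ≤ T) (x₀ : E) :
    ∃ (n : ℕ) (K : ℝ≥0), ContractingWith K (picardMap hT hF.continuousOn x₀)^[n] := by
  set Λ := ∫ r in 0..T, L r
  have hΛ {t : ℝ} (ht : t ∈ Icc 0 T) : 0 ≤ ∫ r in 0..t, L r ∧ ∫ r in 0..t, L r ≤ Λ := by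
    refine ⟨?_, integral_mono_interval le_rfl ht.1 ht.2
      ((ae_restrict_iff' measurableSet_Ioc).2 (ae_of_all _ hF.modulus_nonneg))
      hF.intervalIntegrable⟩
    rw [integral_of_le ht.1]
    exact setIntegral_nonneg measurableSet_Ioc fun s hs =>
      hF.modulus_nonneg s ⟨hs.1, hs.2.trans ht.2⟩
  obtain ⟨n, hn⟩ := (FloorSemiring.tendsto_pow_div_factorial_atTop Λ).eventually
    (gt_mem_nhds zero_lt_one) |>.exists
  have hK : 0 ≤ Λ ^ n / n ! := by
    have := (hΛ ⟨hT, le_rfl⟩).1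
    positivity
  refine ⟨n, (Λ ^ n / n !).toNNReal, by simpa using hn,
    LipschitzWith.of_dist_le_mul fun u w => ?_⟩
  rw [Real.coe_toNNReal _ hK, ContinuousMap.dist_le (by positivity)]
  intro t
  refine (dist_iterate_picardMap_apply_le hF hT u w n t).trans ?_
  gcongr
  exacts [(hΛ t.2).1, (hΛ t.2).2]

theorem HasIntegrableLipschitzModulus.exists_solvesIntegralEq [CompleteSpace E]
    (hF : HasIntegrableLipschitzModulus F L T) (hT : 0 ≤ T) (x₀ : E) :
    ∃ u, SolvesIntegralEq F x₀ T u := by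
  obtain ⟨n, K, hK⟩ := exists_contractingWith_iterate_picardMap hF hT x₀
  set u := hK.fixedPoint _
  have hu : picardMap hT hF.continuousOn x₀ u = u := hK.isFixedPt_fixedPoint_iterate
  refine ⟨IccExtend hT u, u.continuous.Icc_extend'.continuousOn, fun t ht => ?_⟩
  rw [IccExtend_of_mem hT _ ht]
  exact (DFunLike.congr_fun hu ⟨t, ht⟩).symm

theorem HasIntegrableLipschitzModulus.eqOn_of_solvesIntegralEq [CompleteSpace E]
    (hF : HasIntegrableLipschitzModulus F L T) (hT : 0 ≤ T) {u w : ℝ → E}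
    (hu : SolvesIntegralEq F x₀ T u) (hw : SolvesIntegralEq F x₀ T w) : EqOn u w (Icc 0 T) := by
  obtain ⟨n, K, hK⟩ := exists_contractingWith_iterate_picardMap hF hT x₀
  have key {v : ℝ → E} (hv : SolvesIntegralEq F x₀ T v) :
      IsFixedPt (picardMap hT hF.continuousOn x₀)^[n]
        ⟨fun t => v t, hv.continuousOn.comp_continuous continuous_subtype_val Subtype.prop⟩ := by
    refine IsFixedPt.iterate (ContinuousMap.ext fun t => ?_) n
    change x₀ + _ = v t
    rw [hv.eq_integral t t.2]
    congr 1
    refine integral_congr fun s hs => ?_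
    rw [uIcc_of_le t.2.1] at hs
    simp [IccExtend_of_mem hT _ (⟨hs.1, hs.2.trans t.2.2⟩ : s ∈ Icc 0 T)]
  intro t ht
  exact congrArg (· ⟨t, ht⟩) (hK.fixedPoint_unique' (key hu) (key hw))

end Picard

lemma exists_forall_eqOn_Ico_of_compatible {E : Type*} [Zero E] {P : ℝ → Prop}
    (u : ℝ → ℝ → E) (hu : ∀ T T', P T → P T' → T ≤ T' → EqOn (u T) (u T') (Icc 0 T)) :
    ∃ f : ℝ → E, (∀ T, P T → EqOn f (u T) (Ico 0 T)) ∧ ∀ t, (∀ T, P T → T ≤ t) → f t = 0 := by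
  classical
  refine ⟨fun t => if h : ∃ T, P T ∧ t < T then u h.choose t else 0, fun T hT s hs => ?_,
    fun t ht => dif_neg (by simpa using ht)⟩
  have hex : ∃ T, P T ∧ s < T := ⟨T, hT, hs.2⟩
  obtain ⟨hT', hsT'⟩ := hex.choose_spec
  simp only [dif_pos hex]
  rcases le_total T hex.choose with hle | hle
  · exact (hu _ _ hT hT' hle ⟨hs.1, hs.2.le⟩).symm
  · exact hu _ _ hT' hT hle ⟨hs.1, hsT'.le⟩

lemma abs_rpow_sub_rpow_le {a ℓ M x y : ℝ} (ha : 0 < a) (hℓ : 0 < ℓ) (hx : x ∈ Icc ℓ M)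
    (hy : y ∈ Icc ℓ M) : |x ^ a - y ^ a| ≤ a * (ℓ ^ (a - 1) + M ^ (a - 1)) * |x - y| := by
  have hderiv (z) (hz : z ∈ Icc ℓ M) :
      HasDerivWithinAt (fun x : ℝ => x ^ a) (a * z ^ (a - 1)) (Icc ℓ M) z :=
    (Real.hasDerivAt_rpow_const (Or.inl (hℓ.trans_le hz.1).ne')).hasDerivWithinAt
  have hbound (z) (hz : z ∈ Icc ℓ M) :
      ‖a * z ^ (a - 1)‖ ≤ a * (ℓ ^ (a - 1) + M ^ (a - 1)) := by
    have hz0 : 0 < z := hℓ.trans_le hz.1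
    rw [Real.norm_eq_abs, abs_of_pos (mul_pos ha (Real.rpow_pos_of_pos hz0 _))]
    gcongr
    rcases le_total 1 a with h | h
    · have := Real.rpow_le_rpow hz0.le hz.2 (sub_nonneg.2 h)
      have := Real.rpow_nonneg hℓ.le (a - 1)
      linarith
    · have := Real.rpow_le_rpow_of_nonpos hℓ hz.1 (sub_nonpos.2 h)
      have := Real.rpow_nonneg (hℓ.le.trans (hz.1.trans hz.2)) (a - 1)
      linarith
  simpa [Real.norm_eq_abs] using
    (convex_Icc ℓ M).norm_image_sub_le_of_norm_hasDerivWithin_le hderiv hbound hy hx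

lemma abs_div_sub_div_le {p q P Q d : ℝ} (hq : 0 ≤ q) (hqQ : q ≤ Q) (hd : 0 < d) (hP : d ≤ P)
    (hQ : d ≤ Q) : |p / P - q / Q| ≤ (|p - q| + |P - Q|) / d := by
  have hP0 : 0 < P := hd.trans_le hP
  have hQ0 : 0 < Q := hd.trans_le hQ
  have key : p / P - q / Q = ((p - q) + q / Q * (Q - P)) / P := by field_simp; ring
  rw [key, abs_div, abs_of_pos hP0]
  calc |p - q + q / Q * (Q - P)| / P ≤ (|p - q| + |P - Q|) / P := by
        gcongr
        refine (abs_add_le _ _).trans (add_le_add le_rfl ?_)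
        rw [abs_mul, abs_of_nonneg (div_nonneg hq hQ0.le), abs_sub_comm]
        exact mul_le_of_le_one_left (abs_nonneg _) (div_le_one_of_le₀ hqQ hQ0.le)
    _ ≤ _ := div_le_div_of_nonneg_left (by positivity) hd hP

lemma mul_exp_neg_le_one_sub_exp_neg (t : ℝ) : t * Real.exp (-t) ≤ 1 - Real.exp (-t) := by
  have := Real.add_one_le_exp t
  rw [Real.exp_neg, ← div_eq_mul_inv, div_le_iff₀ (Real.exp_pos t), sub_mul,
    inv_mul_cancel₀ (Real.exp_pos t).ne']
  linarith

lemma exists_add_rpow_div_eq {a l K : ℝ} (ha : 0 < a) (hl : 0 ≤ l) (hK : 0 < K) :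
    ∃ x ∈ Icc 0 l, x + x ^ a / K = l := by
  have hcont : ContinuousOn (fun x : ℝ => x + x ^ a / K) (Icc 0 l) :=
    continuousOn_id.add ((continuousOn_id.rpow_const fun _ _ => Or.inr ha.le).div_const K)
  refine intermediate_value_Icc hl hcont ⟨?_, ?_⟩
  · simp [Real.zero_rpow ha.ne', hl]
  · have : 0 ≤ l ^ a / K := div_nonneg (Real.rpow_nonneg hl a) hK.le
    linarith

lemma sub_le_of_add_rpow_div_eq {a l K K' K₁ x y : ℝ} (ha : 0 < a) (hx : x ∈ Icc 0 l)
    (hy : 0 ≤ y) (hxK : x + x ^ a / K = l) (hyK : y + y ^ a / K' = l) (hK₁ : 0 < K₁)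
    (hK : K₁ ≤ K) (hK' : K₁ ≤ K') : x - y ≤ l ^ a / K₁ ^ 2 * |K - K'| := by
  have hK0 : 0 < K := hK₁.trans_le hK
  have hK'0 : 0 < K' := hK₁.trans_le hK'
  have hla : 0 ≤ l ^ a := Real.rpow_nonneg (hx.1.trans hx.2) a
  rcases le_total x y with hxy | hxy
  · have : 0 ≤ l ^ a / K₁ ^ 2 * |K - K'| := by positivity
    linarith
  calc x - y = y ^ a / K' - x ^ a / K := by linarith
    _ ≤ x ^ a / K' - x ^ a / K := by gcongr
    _ = x ^ a * (K - K') / (K * K') := by field_simp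
    _ ≤ l ^ a * |K - K'| / (K * K') := div_le_div_of_nonneg_right
        ((mul_le_mul_of_nonneg_left (le_abs_self _) (Real.rpow_nonneg hx.1 a)).trans
          (mul_le_mul_of_nonneg_right (Real.rpow_le_rpow hx.1 hx.2 ha.le) (abs_nonneg _)))
        (by positivity)
    _ ≤ l ^ a * |K - K'| / (K₁ * K₁) := div_le_div_of_nonneg_left (by positivity)
        (by positivity) (mul_le_mul hK hK' hK₁.le hK0.le)
    _ = _ := by ring

lemma abs_sub_le_of_add_rpow_div_eq {a l K K' K₁ x y : ℝ} (ha : 0 < a) (hx : x ∈ Icc 0 l)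
    (hy : y ∈ Icc 0 l) (hxK : x + x ^ a / K = l) (hyK : y + y ^ a / K' = l) (hK₁ : 0 < K₁)
    (hK : K₁ ≤ K) (hK' : K₁ ≤ K') : |x - y| ≤ l ^ a / K₁ ^ 2 * |K - K'| :=
  abs_sub_le_iff.2 ⟨sub_le_of_add_rpow_div_eq ha hx hy.1 hxK hyK hK₁ hK hK',
    abs_sub_comm K K' ▸ sub_le_of_add_rpow_div_eq ha hy hx.1 hyK hxK hK₁ hK' hK⟩

namespace CompleteGraphIVP

variable {V : Type*}

section

variable [Fintype V]

section Drift

variable {a : ℝ} {lam y z : V → ℝ}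

lemma gdrift_le (hy : ∀ w, 0 ≤ y w) (v : V) : gdrift a lam y v ≤ lam v := by
  have : 0 ≤ y v ^ a / ∑ w, y w ^ a :=
    div_nonneg (Real.rpow_nonneg (hy v) a) (sum_nonneg fun w _ => Real.rpow_nonneg (hy w) a)
  simp only [gdrift]
  linarith

lemma sub_one_le_gdrift (hy : ∀ w, 0 ≤ y w) (hpos : 0 < ∑ w, y w ^ a) (v : V) :
    lam v - 1 ≤ gdrift a lam y v := by
  have : y v ^ a / ∑ w, y w ^ a ≤ 1 := div_le_one_of_le₀
    (single_le_sum (fun w _ => Real.rpow_nonneg (hy w) a) (mem_univ v)) hpos.le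
  simp only [gdrift]
  linarith

lemma sum_gdrift (h : ∑ w, y w ^ a ≠ 0) : ∑ v, gdrift a lam y v = ∑ v, lam v - 1 := by
  simp only [gdrift, sum_sub_distrib, ← sum_div, div_self h]

lemma half_le_gdrift (ha : 0 < a) (hy : ∀ w, 0 ≤ y w) {v w : V} {μ c : ℝ} (hμ : 0 < μ)
    (hw : μ ≤ y w) (hv : y v ≤ c * μ) (hc : c ^ a ≤ lam v / 2) :
    lam v / 2 ≤ gdrift a lam y v := by
  have hc0 : 0 ≤ c := nonneg_of_mul_nonneg_left ((hy v).trans hv) hμ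
  have hden : μ ^ a ≤ ∑ u, y u ^ a := (Real.rpow_le_rpow hμ.le hw ha.le).trans
    (single_le_sum (fun u _ => Real.rpow_nonneg (hy u) a) (mem_univ w))
  have : y v ^ a / ∑ u, y u ^ a ≤ lam v / 2 :=
    calc y v ^ a / ∑ u, y u ^ a ≤ (c * μ) ^ a / μ ^ a := by
          gcongr
          exact hy v
      _ = c ^ a := by
          rw [Real.mul_rpow hc0 hμ.le, mul_div_cancel_right₀ _ (Real.rpow_pos_of_pos hμ a).ne']
      _ ≤ lam v / 2 := hc
  simp only [gdrift]
  linarith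

lemma continuousAt_gdrift (ha : 0 < a) (h : ∑ w, y w ^ a ≠ 0) :
    ContinuousAt (gdrift a lam) y := by
  have hpow (u : V) : ContinuousAt (fun x : V → ℝ => x u ^ a) y :=
    (continuous_apply u).continuousAt.rpow_const (Or.inr ha.le)
  exact continuousAt_pi.2 fun v =>
    continuousAt_const.sub ((hpow v).div (tendsto_finsetSum _ fun u _ => hpow u) h)

lemma dist_gdrift_le [Nonempty V] (ha : 0 < a) {ℓ M d : ℝ} (hℓ : 0 < ℓ) (hd : 0 < d)
    (hy : ∀ v, y v ∈ Icc ℓ M) (hz : ∀ v, z v ∈ Icc ℓ M) (hyd : d ≤ ∑ v, y v ^ a)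
    (hzd : d ≤ ∑ v, z v ^ a) : dist (gdrift a lam y) (gdrift a lam z)
      ≤ (Fintype.card V + 1) * (a * (ℓ ^ (a - 1) + M ^ (a - 1))) / d * dist y z := by
  set K := a * (ℓ ^ (a - 1) + M ^ (a - 1))
  have hK : 0 ≤ K := by
    have hM := (hy (Classical.arbitrary V)).1.trans (hy (Classical.arbitrary V)).2
    have := Real.rpow_nonneg hℓ.le (a - 1)
    have := Real.rpow_nonneg (hℓ.le.trans hM) (a - 1)
    positivity
  have hpow (w : V) : |y w ^ a - z w ^ a| ≤ K * dist y z :=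
    (abs_rpow_sub_rpow_le ha hℓ (hy w) (hz w)).trans
      (mul_le_mul_of_nonneg_left (dist_le_pi_dist y z w) hK)
  have hsum : |∑ w, y w ^ a - ∑ w, z w ^ a| ≤ Fintype.card V * (K * dist y z) := by
    rw [← sum_sub_distrib]
    refine (abs_sum_le_sum_abs _ _).trans ?_
    simpa using Finset.sum_le_sum fun w (_ : w ∈ Finset.univ) => hpow w
  refine (dist_pi_le_iff (by positivity)).2 fun v => ?_
  rw [Real.dist_eq, gdrift, gdrift, sub_sub_sub_cancel_left, abs_sub_comm]
  refine (abs_div_sub_div_le (Real.rpow_nonneg (hℓ.le.trans (hz v).1) a)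
    (single_le_sum (fun w _ => Real.rpow_nonneg (hℓ.le.trans (hz w).1) a) (mem_univ v))
    hd hyd hzd).trans ?_
  calc _ ≤ (K * dist y z + Fintype.card V * (K * dist y z)) / d := by
        gcongr
        exact hpow v
    _ = _ := by ring

lemma gdrift_smul {c : ℝ} (hc : 0 < c) (hy : ∀ w, 0 ≤ y w) :
    gdrift a lam (c • y) = gdrift a lam y := by
  have hpow (w : V) : (c • y) w ^ a = c ^ a * y w ^ a := Real.mul_rpow hc.le (hy w)
  funext v
  simp only [gdrift, hpow, ← mul_sum, mul_div_mul_left _ _ (Real.rpow_pos_of_pos hc a).ne']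

end Drift

def mass (lam q0 : V → ℝ) (t : ℝ) : ℝ := ∑ v, q0 v + (∑ v, lam v - 1) * t

noncomputable def barrier (κ : ℝ) (lam q0 : V → ℝ) (t : ℝ) : ℝ :=
  κ * ((1 - Real.exp (-t)) * mass lam q0 t)

/-- The state projected into the tube that the solution will be shown never to leave; on it the
drift is Lipschitz. -/
noncomputable def clamp (κ : ℝ) (lam q0 : V → ℝ) (t : ℝ) (x : V → ℝ) : V → ℝ := fun v =>
  max (min (x v) (q0 v + lam v * t)) (max (barrier κ lam q0 t) (q0 v + (lam v - 1) * t))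

noncomputable def clampedDrift (a κ : ℝ) (lam q0 : V → ℝ) (t : ℝ) (x : V → ℝ) : V → ℝ :=
  gdrift a lam (clamp κ lam q0 t x)

/-- A coordinate on the barrier gets drift at least `λ_v / 2` because `(κ |V|) ^ a ≤ λ_v / 2` (some
coordinate is at least `m(t) / |V|`), while `∑ q⁰ + 2 |∑ λ - 1|` bounds the slope of
`(1 - e^{-t}) m(t)`. -/
structure IsBarrierScale (a : ℝ) (lam q0 : V → ℝ) (κ : ℝ) : Prop where
  pos : 0 < κ
  rpow_le : ∀ v, (κ * Fintype.card V) ^ a ≤ lam v / 2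
  slope_lt : ∀ v, κ * (∑ w, q0 w + 2 * |∑ w, lam w - 1|) < lam v / 2

structure IsAdmissible (a κ : ℝ) (lam q0 : V → ℝ) (T : ℝ) : Prop where
  exponent_pos : 0 < a
  initial_nonneg : ∀ v, 0 ≤ q0 v
  initial_mass_pos : 0 < ∑ v, q0 v
  scale : IsBarrierScale a lam q0 κ
  horizon_nonneg : 0 ≤ T
  mass_pos : 0 < mass lam q0 T

variable {a κ T t : ℝ} {lam q0 : V → ℝ}

lemma exists_isBarrierScale (ha : 0 < a) (hlam : ∀ v, 0 < lam v) (q0 : V → ℝ) :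
    ∃ κ, IsBarrierScale a lam q0 κ := by
  set P := ∑ w, q0 w + 2 * |∑ w, lam w - 1|
  have hpow : Tendsto (fun κ : ℝ => (κ * Fintype.card V) ^ a) (𝓝 0) (𝓝 0) := by
    simpa [Real.zero_rpow ha.ne'] using
      ((continuous_id.mul continuous_const).rpow_const fun _ => Or.inr ha.le).tendsto 0
  have hlin : Tendsto (fun κ : ℝ => κ * P) (𝓝 0) (𝓝 0) := by
    simpa using (tendsto_id (x := 𝓝 (0 : ℝ))).mul_const P
  have hev : ∀ᶠ κ in 𝓝[>] (0 : ℝ), 0 < κ ∧ (∀ v, (κ * Fintype.card V) ^ a < lam v / 2) ∧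
      ∀ v, κ * P < lam v / 2 :=
    eventually_mem_nhdsWithin.and <|
      (eventually_all.2 fun v => hpow.eventually (gt_mem_nhds (half_pos (hlam v)))).and
      (eventually_all.2 fun v => hlin.eventually (gt_mem_nhds (half_pos (hlam v))))
      |>.filter_mono nhdsWithin_le_nhds
  obtain ⟨κ, hκ, hpow, hlin⟩ := hev.exists
  exact ⟨κ, ⟨hκ, fun v => (hpow v).le, hlin⟩⟩

lemma mass_zero : mass lam q0 0 = ∑ v, q0 v := by simp [mass]

lemma continuous_mass : Continuous (mass lam q0) := by
  unfold mass; fun_prop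

lemma hasDerivAt_mass (t : ℝ) : HasDerivAt (mass lam q0) (∑ v, lam v - 1) t :=
  (((hasDerivAt_id t).const_mul _).const_add _).congr_deriv (mul_one _)

lemma min_le_mass (ht : t ∈ Icc 0 T) : min (∑ v, q0 v) (mass lam q0 T) ≤ mass lam q0 t := by
  rcases le_total 0 (∑ v, lam v - 1) with h | h
  · exact (min_le_left _ _).trans (by simp only [mass]; nlinarith [ht.1])
  · exact (min_le_right _ _).trans (by simp only [mass]; nlinarith [ht.2])

lemma continuous_barrier : Continuous (barrier κ lam q0) := by
  unfold barrier mass; fun_prop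

lemma hasDerivAt_barrier (t : ℝ) : HasDerivAt (barrier κ lam q0)
    (κ * (Real.exp (-t) * mass lam q0 t + (1 - Real.exp (-t)) * (∑ v, lam v - 1))) t := by
  have hexp : HasDerivAt (fun s => 1 - Real.exp (-s)) (Real.exp (-t)) t := by
    simpa using ((Real.hasDerivAt_exp (-t)).comp t (hasDerivAt_neg t)).const_sub 1
  exact (hexp.mul (hasDerivAt_mass t)).const_mul κ

lemma barrier_slope_le (hq0 : 0 ≤ ∑ v, q0 v) (ht : 0 ≤ t) :
    Real.exp (-t) * mass lam q0 t + (1 - Real.exp (-t)) * (∑ v, lam v - 1)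
      ≤ ∑ v, q0 v + 2 * |∑ v, lam v - 1| := by
  have he : 0 < Real.exp (-t) := Real.exp_pos _
  have he1 : Real.exp (-t) ≤ 1 := Real.exp_le_one_iff.2 (neg_nonpos.2 ht)
  have hte : t * Real.exp (-t) ≤ 1 := (mul_exp_neg_le_one_sub_exp_neg t).trans (by linarith)
  have hS := le_abs_self (∑ v, lam v - 1)
  have hS0 := abs_nonneg (∑ v, lam v - 1)
  have hq : Real.exp (-t) * ∑ v, q0 v ≤ ∑ v, q0 v := mul_le_of_le_one_left hq0 he1
  have hlin : (∑ v, lam v - 1) * (t * Real.exp (-t)) ≤ |∑ v, lam v - 1| :=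
    (mul_le_mul_of_nonneg_right hS (by positivity)).trans (mul_le_of_le_one_right hS0 hte)
  have hexp : (1 - Real.exp (-t)) * (∑ v, lam v - 1) ≤ |∑ v, lam v - 1| :=
    (mul_le_mul_of_nonneg_left hS (by linarith)).trans (mul_le_of_le_one_left hS0 (by linarith))
  have : Real.exp (-t) * mass lam q0 t
      = Real.exp (-t) * ∑ v, q0 v + (∑ v, lam v - 1) * (t * Real.exp (-t)) := by
    simp only [mass]; ring
  linarith

lemma barrier_nonneg (hκ : 0 ≤ κ) (ht : 0 ≤ t) (hm : 0 ≤ mass lam q0 t) :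
    0 ≤ barrier κ lam q0 t := by
  have : 0 ≤ 1 - Real.exp (-t) := sub_nonneg.2 (Real.exp_le_one_iff.2 (neg_nonpos.2 ht))
  unfold barrier
  positivity

lemma barrier_pos (hκ : 0 < κ) (ht : 0 < t) (hm : 0 < mass lam q0 t) :
    0 < barrier κ lam q0 t := by
  have : 0 < 1 - Real.exp (-t) := sub_pos.2 (Real.exp_lt_one_iff.2 (neg_lt_zero.2 ht))
  unfold barrier
  positivity

lemma barrier_le_mul_mass (hκ : 0 ≤ κ) (hm : 0 ≤ mass lam q0 t) :
    barrier κ lam q0 t ≤ κ * mass lam q0 t := by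
  have : 0 < Real.exp (-t) := Real.exp_pos _
  unfold barrier
  gcongr
  nlinarith

lemma mul_le_barrier (hκ : 0 ≤ κ) (ht : t ∈ Icc 0 T)
    (hm : 0 ≤ min (∑ v, q0 v) (mass lam q0 T)) :
    κ * Real.exp (-T) * min (∑ v, q0 v) (mass lam q0 T) * t ≤ barrier κ lam q0 t := by
  have hexp : Real.exp (-T) ≤ Real.exp (-t) := Real.exp_le_exp.2 (neg_le_neg ht.2)
  have hmass := min_le_mass ht (lam := lam) (q0 := q0)
  have h : Real.exp (-T) * min (∑ v, q0 v) (mass lam q0 T) * t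
      ≤ (1 - Real.exp (-t)) * mass lam q0 t := by
    nlinarith [mul_le_mul_of_nonneg_right (mul_le_mul hexp hmass hm (Real.exp_pos _).le) ht.1,
      mul_le_mul_of_nonneg_right (mul_exp_neg_le_one_sub_exp_neg t) (hm.trans hmass)]
  calc κ * Real.exp (-T) * min (∑ v, q0 v) (mass lam q0 T) * t
      = κ * (Real.exp (-T) * min (∑ v, q0 v) (mass lam q0 T) * t) := by ring
    _ ≤ barrier κ lam q0 t := mul_le_mul_of_nonneg_left h hκ

lemma clamp_apply_of_mem {x : V → ℝ} {v : V} (hb : barrier κ lam q0 t ≤ x v)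
    (hlo : q0 v + (lam v - 1) * t ≤ x v) (hhi : x v ≤ q0 v + lam v * t) :
    clamp κ lam q0 t x v = x v := by
  simp [clamp, hb, hlo, hhi]

lemma barrier_le_clamp (x : V → ℝ) (v : V) : barrier κ lam q0 t ≤ clamp κ lam q0 t x v :=
  le_max_of_le_right (le_max_left _ _)

lemma le_clamp {x : V → ℝ} {v : V} (hhi : x v ≤ q0 v + lam v * t) :
    x v ≤ clamp κ lam q0 t x v :=
  le_max_of_le_left (le_min le_rfl hhi)

lemma clamp_le (x : V → ℝ) (v : V) : clamp κ lam q0 t x v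
    ≤ max (q0 v + lam v * t) (max (barrier κ lam q0 t) (q0 v + (lam v - 1) * t)) :=
  max_le_max (min_le_right _ _) le_rfl

lemma dist_clamp_le (x y : V → ℝ) :
    dist (clamp κ lam q0 t x) (clamp κ lam q0 t y) ≤ dist x y := by
  refine (dist_pi_le_iff dist_nonneg).2 fun v => ?_
  simp only [clamp, Real.dist_eq]
  refine (abs_max_sub_max_le_abs _ _ _).trans ((abs_min_sub_min_le_max _ _ _ _).trans ?_)
  simpa [← Real.dist_eq] using dist_le_pi_dist x y v

lemma continuous_clamp : Continuous (uncurry (clamp κ lam q0)) := by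
  have := continuous_barrier (κ := κ) (lam := lam) (q0 := q0)
  refine continuous_pi fun v => ?_
  simp only [uncurry, clamp]
  fun_prop

lemma _root_.SolvesIntegralEq.continuousOn_apply {F : ℝ → (V → ℝ) → V → ℝ} {x₀ : V → ℝ}
    {u : ℝ → V → ℝ} (hu : SolvesIntegralEq F x₀ T u) (v : V) :
    ContinuousOn (fun s => u s v) (Icc 0 T) :=
  (continuous_apply v).comp_continuousOn hu.continuousOn

namespace IsAdmissible

lemma mass_pos_of_mem (h : IsAdmissible a κ lam q0 T) (ht : t ∈ Icc 0 T) :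
    0 < mass lam q0 t :=
  (lt_min h.initial_mass_pos h.mass_pos).trans_le (min_le_mass ht)

lemma nonempty (h : IsAdmissible a κ lam q0 T) : Nonempty V := by
  by_contra hV
  simpa [not_nonempty_iff.1 hV] using h.initial_mass_pos

lemma clamp_nonneg (h : IsAdmissible a κ lam q0 T) (ht : t ∈ Icc 0 T) (x : V → ℝ) (v : V) :
    0 ≤ clamp κ lam q0 t x v :=
  (barrier_nonneg h.scale.pos.le ht.1 (h.mass_pos_of_mem ht).le).trans (barrier_le_clamp x v)

lemma exists_pos_le_sum_rpow_clamp (h : IsAdmissible a κ lam q0 T) :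
    ∃ d > 0, ∀ t ∈ Icc 0 T, ∀ x, d ≤ ∑ w, clamp κ lam q0 t x w ^ a := by
  obtain ⟨w, -, hw⟩ := exists_lt_of_sum_lt (s := univ) (f := fun _ => (0 : ℝ)) (g := q0)
    (by simpa using h.initial_mass_pos)
  set lo := fun t => max (barrier κ lam q0 t) (q0 w + (lam w - 1) * t)
  have hlo : ∀ t ∈ Icc 0 T, 0 < lo t := by
    intro t ht
    rcases ht.1.eq_or_lt with rfl | ht0
    · exact lt_max_of_lt_right (by simpa using hw)
    · exact lt_max_of_lt_left (barrier_pos h.scale.pos ht0 (h.mass_pos_of_mem ht))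
  obtain ⟨t₁, ht₁, hmin⟩ := isCompact_Icc.exists_isMinOn (nonempty_Icc.2 h.horizon_nonneg)
    (continuous_barrier.max (by fun_prop) : Continuous lo).continuousOn
  refine ⟨lo t₁ ^ a, Real.rpow_pos_of_pos (hlo t₁ ht₁) a, fun t ht x => ?_⟩
  calc lo t₁ ^ a ≤ clamp κ lam q0 t x w ^ a :=
        Real.rpow_le_rpow (hlo t₁ ht₁).le ((hmin ht).trans (le_max_right _ _))
          h.exponent_pos.le
    _ ≤ _ := single_le_sum (fun u _ => Real.rpow_nonneg (h.clamp_nonneg ht x u) a) (mem_univ w)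

lemma sum_rpow_clamp_pos (h : IsAdmissible a κ lam q0 T) (ht : t ∈ Icc 0 T) (x : V → ℝ) :
    0 < ∑ w, clamp κ lam q0 t x w ^ a := by
  obtain ⟨d, hd, hle⟩ := h.exists_pos_le_sum_rpow_clamp
  exact hd.trans_le (hle t ht x)

lemma exists_clamp_le (h : IsAdmissible a κ lam q0 T) :
    ∃ M, 0 ≤ M ∧ ∀ t ∈ Icc 0 T, ∀ x v, clamp κ lam q0 t x v ≤ M := by
  have := h.nonempty
  obtain ⟨M, hM⟩ := isCompact_Icc.exists_bound_of_continuousOn (s := Icc 0 T)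
    (f := fun t v => max (q0 v + lam v * t) (max (barrier κ lam q0 t) (q0 v + (lam v - 1) * t)))
    (continuous_pi fun v => (by fun_prop : Continuous fun t => q0 v + lam v * t).max
      (continuous_barrier.max (by fun_prop))).continuousOn
  have hle (t) (ht : t ∈ Icc 0 T) (x : V → ℝ) (v : V) : clamp κ lam q0 t x v ≤ M :=
    (clamp_le x v).trans ((le_abs_self _).trans ((norm_le_pi_norm _ v).trans (hM t ht)))
  have h0 : (0 : ℝ) ∈ Icc 0 T := ⟨le_rfl, h.horizon_nonneg⟩
  exact ⟨M, (h.clamp_nonneg h0 0 (Classical.arbitrary V)).trans (hle 0 h0 0 _), hle⟩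

lemma continuousOn_clampedDrift (h : IsAdmissible a κ lam q0 T) :
    ContinuousOn (uncurry (clampedDrift a κ lam q0)) (Icc 0 T ×ˢ univ) := by
  intro p hp
  have hp' : ∑ w, uncurry (clamp κ lam q0) p w ^ a ≠ 0 := (h.sum_rpow_clamp_pos hp.1 p.2).ne'
  exact (continuousAt_gdrift h.exponent_pos hp').comp_continuousWithinAt
    continuous_clamp.continuousWithinAt

lemma exists_hasIntegrableLipschitzModulus (h : IsAdmissible a κ lam q0 T) :
    ∃ L, HasIntegrableLipschitzModulus (clampedDrift a κ lam q0) L T := by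
  have := h.nonempty
  have ha := h.exponent_pos
  obtain ⟨d, hd, hle⟩ := h.exists_pos_le_sum_rpow_clamp
  obtain ⟨M, hM0, hM⟩ := h.exists_clamp_le
  set c := κ * Real.exp (-T) * min (∑ v, q0 v) (mass lam q0 T)
  have hc : 0 < c := mul_pos (mul_pos h.scale.pos (Real.exp_pos _))
    (lt_min h.initial_mass_pos h.mass_pos)
  set C := (Fintype.card V + 1) * a / d
  refine ⟨fun s => C * c ^ (a - 1) * s ^ (a - 1) + C * M ^ (a - 1),
    h.continuousOn_clampedDrift, ?_, ?_, fun s hs => ?_, fun s hs x y => ?_⟩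
  · exact ((intervalIntegrable_rpow' (by linarith)).const_mul _).add intervalIntegrable_const
  · exact (continuousOn_const.mul (continuousOn_id.rpow_const fun s hs => Or.inl hs.1.ne')).add
      continuousOn_const
  · have := Real.rpow_nonneg hc.le (a - 1)
    have := Real.rpow_nonneg hs.1.le (a - 1)
    have := Real.rpow_nonneg hM0 (a - 1)
    positivity
  have hsT : s ∈ Icc 0 T := ⟨hs.1.le, hs.2⟩
  have hmem (z : V → ℝ) (v : V) : clamp κ lam q0 s z v ∈ Icc (c * s) M :=
    ⟨(mul_le_barrier h.scale.pos.le hsT (lt_min h.initial_mass_pos h.mass_pos).le).trans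
      (barrier_le_clamp z v), hM s hsT z v⟩
  have := Real.rpow_nonneg (mul_pos hc hs.1).le (a - 1)
  have := Real.rpow_nonneg hM0 (a - 1)
  calc dist (clampedDrift a κ lam q0 s x) (clampedDrift a κ lam q0 s y)
      ≤ (Fintype.card V + 1) * (a * ((c * s) ^ (a - 1) + M ^ (a - 1))) / d
          * dist (clamp κ lam q0 s x) (clamp κ lam q0 s y) :=
        dist_gdrift_le ha (mul_pos hc hs.1) hd (hmem x) (hmem y) (hle s hsT x) (hle s hsT y)
    _ ≤ (Fintype.card V + 1) * (a * ((c * s) ^ (a - 1) + M ^ (a - 1))) / d * dist x y := by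
        gcongr
        exact dist_clamp_le x y
    _ = _ := by rw [Real.mul_rpow hc.le hs.1.le]; ring

lemma exists_solvesIntegralEq (h : IsAdmissible a κ lam q0 T) :
    ∃ u, SolvesIntegralEq (clampedDrift a κ lam q0) q0 T u :=
  h.exists_hasIntegrableLipschitzModulus.elim fun _ hL =>
    hL.exists_solvesIntegralEq h.horizon_nonneg q0

variable {u : ℝ → V → ℝ}

lemma eqOn_of_solvesIntegralEq (h : IsAdmissible a κ lam q0 T) {w : ℝ → V → ℝ}
    (hu : SolvesIntegralEq (clampedDrift a κ lam q0) q0 T u)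
    (hw : SolvesIntegralEq (clampedDrift a κ lam q0) q0 T w) : EqOn u w (Icc 0 T) :=
  h.exists_hasIntegrableLipschitzModulus.elim fun _ hL =>
    hL.eqOn_of_solvesIntegralEq h.horizon_nonneg hu hw

lemma hasDerivWithinAt_Ici (h : IsAdmissible a κ lam q0 T)
    (hu : SolvesIntegralEq (clampedDrift a κ lam q0) q0 T u) (ht : t ∈ Ico 0 T) (v : V) :
    HasDerivWithinAt (fun s => u s v) (clampedDrift a κ lam q0 t (u t) v) (Ici t) t :=
  hasDerivWithinAt_pi.1 ((hu.hasDerivWithinAt h.continuousOn_clampedDrift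
    (Ico_subset_Icc_self ht)).mono_of_mem_nhdsWithin
    (mem_of_superset (Ico_mem_nhdsGE ht.2) (Ico_subset_Icc_self.trans
      (Icc_subset_Icc_left ht.1)))) v

lemma lower_le_solution (h : IsAdmissible a κ lam q0 T)
    (hu : SolvesIntegralEq (clampedDrift a κ lam q0) q0 T u) (ht : t ∈ Icc 0 T) (v : V) :
    q0 v + (lam v - 1) * t ≤ u t v := by
  refine image_le_of_deriv_right_le_deriv_boundary (by fun_prop)
    (fun s _ => (((hasDerivAt_id s).const_mul (lam v - 1)).const_add (q0 v)).hasDerivWithinAt)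
    (by simp [hu.apply_zero h.horizon_nonneg]) (hu.continuousOn_apply v)
    (fun s hs => h.hasDerivWithinAt_Ici hu hs v) (fun s hs => ?_) ht
  rw [mul_one]
  exact sub_one_le_gdrift (h.clamp_nonneg (Set.Ico_subset_Icc_self hs) (u s))
    (h.sum_rpow_clamp_pos (Set.Ico_subset_Icc_self hs) (u s)) v

lemma solution_le_upper (h : IsAdmissible a κ lam q0 T)
    (hu : SolvesIntegralEq (clampedDrift a κ lam q0) q0 T u) (ht : t ∈ Icc 0 T) (v : V) :
    u t v ≤ q0 v + lam v * t := by
  refine image_le_of_deriv_right_le_deriv_boundary (hu.continuousOn_apply v)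
    (fun s hs => h.hasDerivWithinAt_Ici hu hs v)
    (by simp [hu.apply_zero h.horizon_nonneg]) (by fun_prop)
    (fun s _ => (((hasDerivAt_id s).const_mul (lam v)).const_add (q0 v)).hasDerivWithinAt)
    (fun s hs => ?_) ht
  rw [mul_one]
  exact gdrift_le (h.clamp_nonneg (Set.Ico_subset_Icc_self hs) (u s)) v

lemma sum_solution_eq_mass (h : IsAdmissible a κ lam q0 T)
    (hu : SolvesIntegralEq (clampedDrift a κ lam q0) q0 T u) (ht : t ∈ Icc 0 T) :
    ∑ v, u t v = mass lam q0 t := by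
  have hconst := constant_of_has_deriv_right_zero (f := fun s => ∑ v, u s v - mass lam q0 s)
    ((continuousOn_finsetSum _ fun v _ => hu.continuousOn_apply v).sub
      continuous_mass.continuousOn) (fun s hs => ?_) t ht
  · simpa [hu.apply_zero h.horizon_nonneg, mass_zero, sub_eq_zero] using hconst
  have hsum := HasDerivWithinAt.fun_sum (u := univ) fun v _ => h.hasDerivWithinAt_Ici hu hs v
  refine (hsum.fun_sub (hasDerivAt_mass s).hasDerivWithinAt).congr_deriv (sub_eq_zero.2 ?_)
  exact sum_gdrift (h.sum_rpow_clamp_pos (Set.Ico_subset_Icc_self hs) (u s)).ne'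

lemma barrier_le_solution (h : IsAdmissible a κ lam q0 T)
    (hu : SolvesIntegralEq (clampedDrift a κ lam q0) q0 T u) (ht : t ∈ Icc 0 T) (v : V) :
    barrier κ lam q0 t ≤ u t v := by
  have := h.nonempty
  refine image_le_of_deriv_right_lt_deriv_boundary' continuous_barrier.continuousOn
    (fun s _ => (hasDerivAt_barrier s).hasDerivWithinAt)
    (by simpa [barrier, hu.apply_zero h.horizon_nonneg] using h.initial_nonneg v)
    (hu.continuousOn_apply v) (fun s hs => h.hasDerivWithinAt_Ici hu hs v)
    (fun s hs hsv => ?_) ht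
  have hsT := Set.Ico_subset_Icc_self hs
  have hm := h.mass_pos_of_mem hsT
  have hn : (0 : ℝ) < Fintype.card V := Nat.cast_pos.2 Fintype.card_pos
  obtain ⟨w, -, hw⟩ := exists_le_of_sum_le (s := univ)
    (f := fun _ => mass lam q0 s / Fintype.card V) (g := u s) univ_nonempty
    (by simp [h.sum_solution_eq_mass hu hsT, mul_div_cancel₀ _ hn.ne'])
  have hclamp : clamp κ lam q0 s (u s) v = barrier κ lam q0 s :=
    (clamp_apply_of_mem hsv.le (h.lower_le_solution hu hsT v)
      (h.solution_le_upper hu hsT v)).trans hsv.symm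
  have hhalf : lam v / 2 ≤ clampedDrift a κ lam q0 s (u s) v := by
    refine half_le_gdrift h.exponent_pos (h.clamp_nonneg hsT (u s)) (div_pos hm hn)
      (hw.trans (le_clamp (h.solution_le_upper hu hsT w))) ?_ (h.scale.rpow_le v)
    rw [hclamp, mul_assoc, mul_div_cancel₀ _ hn.ne']
    exact barrier_le_mul_mass h.scale.pos.le hm.le
  have hslope := mul_le_mul_of_nonneg_left
    (barrier_slope_le (lam := lam) (sum_nonneg fun w _ => h.initial_nonneg w) hs.1)
    h.scale.pos.le
  linarith [h.scale.slope_lt v]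

lemma clamp_solution (h : IsAdmissible a κ lam q0 T)
    (hu : SolvesIntegralEq (clampedDrift a κ lam q0) q0 T u) (ht : t ∈ Icc 0 T) :
    clamp κ lam q0 t (u t) = u t :=
  funext fun v => clamp_apply_of_mem (h.barrier_le_solution hu ht v)
    (h.lower_le_solution hu ht v) (h.solution_le_upper hu ht v)

lemma solution_nonneg (h : IsAdmissible a κ lam q0 T)
    (hu : SolvesIntegralEq (clampedDrift a κ lam q0) q0 T u) (ht : t ∈ Icc 0 T) (v : V) :
    0 ≤ u t v :=
  (barrier_nonneg h.scale.pos.le ht.1 (h.mass_pos_of_mem ht).le).trans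
    (h.barrier_le_solution hu ht v)

lemma hasDerivAt_solution (h : IsAdmissible a κ lam q0 T)
    (hu : SolvesIntegralEq (clampedDrift a κ lam q0) q0 T u) (ht : t ∈ Ioo 0 T) :
    HasDerivAt u (gdrift a lam (u t)) t := by
  have := (hu.hasDerivWithinAt h.continuousOn_clampedDrift (Ioo_subset_Icc_self ht)).hasDerivAt
    (Icc_mem_nhds ht.1 ht.2)
  rwa [clampedDrift, h.clamp_solution hu (Ioo_subset_Icc_self ht)] at this

end IsAdmissible

lemma exists_glued_solution (ha : 0 < a) (hq0 : ∀ v, 0 ≤ q0 v) (hs0 : 0 < ∑ v, q0 v)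
    (hκ : IsBarrierScale a lam q0 κ) : ∃ f : ℝ → V → ℝ,
      (∀ t, 0 ≤ t → 0 < mass lam q0 t → ∃ T u, t < T ∧ IsAdmissible a κ lam q0 T ∧
        SolvesIntegralEq (clampedDrift a κ lam q0) q0 T u ∧ EqOn f u (Ico 0 T)) ∧
      ∀ t, 0 ≤ t → mass lam q0 t ≤ 0 → f t = 0 := by
  choose! u hu using fun T (hT : IsAdmissible a κ lam q0 T) => hT.exists_solvesIntegralEq
  obtain ⟨f, hfu, hf0⟩ := exists_forall_eqOn_Ico_of_compatible (P := IsAdmissible a κ lam q0) u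
    fun T T' hT hT' hle => hT.eqOn_of_solvesIntegralEq (hu T hT) ((hu T' hT').mono hle)
  refine ⟨f, fun t ht hm => ?_, fun t ht hm => hf0 t fun T hT => ?_⟩
  · obtain ⟨T, htT, hmT⟩ := ((continuous_mass.tendsto t).eventually (lt_mem_nhds hm)).exists_gt
    have hT : IsAdmissible a κ lam q0 T := ⟨ha, hq0, hs0, hκ, ht.trans htT.le, hmT⟩
    exact ⟨T, u T, htT, hT, hu T hT, hfu T hT⟩
  · by_contra! htT
    exact not_lt.2 hm (hT.mass_pos_of_mem ⟨ht, htT.le⟩)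

theorem exists_isCGSolution_of_sum_pos (ha : 0 < a) (hlam : ∀ v, 0 < lam v)
    (hq0 : ∀ v, 0 ≤ q0 v) (hs0 : 0 < ∑ v, q0 v) : ∃ f, IsCGSolution a lam q0 f := by
  obtain ⟨κ, hκ⟩ := exists_isBarrierScale ha hlam q0
  obtain ⟨f, hloc, hf0⟩ := exists_glued_solution ha hq0 hs0 hκ
  have hvalue (t) (ht : 0 ≤ t) : (∀ v, 0 ≤ f t v) ∧ ∑ v, f t v = max (mass lam q0 t) 0 := by
    rcases lt_or_ge 0 (mass lam q0 t) with hm | hm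
    · obtain ⟨T, u, htT, hT, hu, hfu⟩ := hloc t ht hm
      rw [hfu ⟨ht, htT⟩, hT.sum_solution_eq_mass hu ⟨ht, htT.le⟩, max_eq_left hm.le]
      exact ⟨hT.solution_nonneg hu ⟨ht, htT.le⟩, rfl⟩
    · simp [hf0 t ht hm, max_eq_right hm]
  refine ⟨f, fun t ht => ?_, ?_, fun t ht => (hvalue t ht).1, fun t ht => (hvalue t ht).2,
    fun t ht hft => ?_⟩
  · rcases lt_or_ge 0 (mass lam q0 t) with hm | hm
    · obtain ⟨T, u, htT, hT, hu, hfu⟩ := hloc t ht hm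
      have hnhds : Ico 0 T ∈ 𝓝[Ici 0] t :=
        mem_of_superset (inter_mem_nhdsWithin _ (Iio_mem_nhds htT)) fun s hs => ⟨hs.1, hs.2⟩
      exact ((hu.continuousOn t ⟨ht, htT.le⟩).mono_of_mem_nhdsWithin
        (mem_of_superset hnhds Ico_subset_Icc_self)).congr_of_eventuallyEq
        (eventually_of_mem hnhds hfu) (hfu ⟨ht, htT⟩)
    -- once the mass has vanished, `‖f s‖ ≤ ∑ v, f s v = max (m s) 0 → 0`
    have hlim : Tendsto (fun s => max (mass lam q0 s) 0) (𝓝[Ici 0] t) (𝓝 0) := by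
      have := (((continuous_mass (lam := lam) (q0 := q0)).max
        (continuous_const (y := (0 : ℝ)))).tendsto t).mono_left (nhdsWithin_le_nhds (s := Ici 0))
      rwa [max_eq_right hm] at this
    rw [ContinuousWithinAt, hf0 t ht hm]
    refine squeeze_zero_norm' (eventually_of_mem self_mem_nhdsWithin fun s hs => ?_) hlim
    rw [← (hvalue s hs).2]
    refine (pi_norm_le_iff_of_nonneg (sum_nonneg fun v _ => (hvalue s hs).1 v)).2 fun v => ?_
    rw [Real.norm_of_nonneg ((hvalue s hs).1 v)]
    exact single_le_sum (fun w _ => (hvalue s hs).1 w) (mem_univ v)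
  · obtain ⟨T, u, htT, hT, hu, hfu⟩ := hloc 0 le_rfl (by simpa [mass_zero] using hs0)
    rw [hfu ⟨le_rfl, htT⟩, hu.apply_zero hT.horizon_nonneg]
  · have hm : 0 < mass lam q0 t := by
      by_contra! hm
      exact hft (hf0 t ht.le hm)
    obtain ⟨T, u, htT, hT, hu, hfu⟩ := hloc t ht.le hm
    rw [hfu ⟨ht.le, htT⟩]
    exact (hT.hasDerivAt_solution hu ⟨ht, htT⟩).congr_of_eventuallyEq
      (eventually_of_mem (Ioo_mem_nhds ht htT) fun s hs => hfu ⟨hs.1.le, hs.2⟩)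

lemma isCGSolution_zero (hS : ∑ v, lam v ≤ 1) : IsCGSolution a lam 0 0 := by
  refine ⟨continuousOn_const, rfl, fun _ _ _ => le_rfl, fun t ht => ?_, fun _ _ h => (h rfl).elim⟩
  simp [max_eq_right (mul_nonpos_of_nonpos_of_nonneg (sub_nonpos.2 hS) ht)]

end

/-- `c K v` solves `x + x ^ a / K = λ_v`; this makes `c K` a fixed point of `gdrift a lam` as soon
as `∑ v, c K v ^ a = K`. -/
def IsRootFamily (a : ℝ) (lam : V → ℝ) (c : ℝ → V → ℝ) : Prop :=
  ∀ K, 0 < K → ∀ v, c K v ∈ Icc 0 (lam v) ∧ c K v + c K v ^ a / K = lam v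

variable {a : ℝ} {lam : V → ℝ} {c : ℝ → V → ℝ} {K : ℝ}

lemma exists_isRootFamily (ha : 0 < a) (hlam : ∀ v, 0 ≤ lam v) : ∃ c, IsRootFamily a lam c := by
  have hroot (K : ℝ) :
      ∃ c : V → ℝ, 0 < K → ∀ v, c v ∈ Icc 0 (lam v) ∧ c v + c v ^ a / K = lam v := by
    by_cases hK : 0 < K
    · choose c hc using fun v => exists_add_rpow_div_eq ha (hlam v) hK
      exact ⟨c, fun _ => hc⟩
    · exact ⟨0, fun h => absurd h hK⟩
  choose c hc using hroot
  exact ⟨c, hc⟩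

lemma IsRootFamily.rpow_eq (hc : IsRootFamily a lam c) (hK : 0 < K) (v : V) :
    c K v ^ a = K * (lam v - c K v) := by
  rw [← (hc K hK v).2, add_sub_cancel_left, mul_div_cancel₀ _ hK.ne']

variable [Fintype V]

namespace IsRootFamily

lemma continuousOn_sum (ha : 0 < a) (hlam : ∀ v, 0 ≤ lam v) (hc : IsRootFamily a lam c)
    {K₁ K₂ : ℝ} (hK₁ : 0 < K₁) : ContinuousOn (fun K => ∑ v, c K v) (Icc K₁ K₂) := by
  refine continuousOn_finsetSum _ fun v _ => LipschitzOnWith.continuousOn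
    (K := (lam v ^ a / K₁ ^ 2).toNNReal) (LipschitzOnWith.of_dist_le_mul fun K hK K' hK' => ?_)
  have hK0 := hK₁.trans_le hK.1
  have hK'0 := hK₁.trans_le hK'.1
  rw [Real.dist_eq, Real.dist_eq,
    Real.coe_toNNReal _ (div_nonneg (Real.rpow_nonneg (hlam v) a) (sq_nonneg _))]
  exact abs_sub_le_of_add_rpow_div_eq ha (hc K hK0 v).1 (hc K' hK'0 v).1 (hc K hK0 v).2
    (hc K' hK'0 v).2 hK₁ hK.1 hK'.1

lemma sum_le (ha : 0 < a) (hc : IsRootFamily a lam c) (hK : 0 < K) :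
    ∑ v, c K v ≤ ∑ v, (K * lam v) ^ a⁻¹ := by
  refine sum_le_sum fun v _ => ?_
  have hmem := (hc K hK v).1
  have hle : c K v ^ a ≤ K * lam v := by
    rw [hc.rpow_eq hK]
    nlinarith [hmem.1]
  simpa [Real.rpow_rpow_inv hmem.1 ha.ne'] using
    Real.rpow_le_rpow (Real.rpow_nonneg hmem.1 a) hle (inv_nonneg.2 ha.le)

lemma sub_one_le_sum (ha : 0 < a) (hlam : ∀ v, 0 ≤ lam v) (hc : IsRootFamily a lam c) :
    ∑ v, lam v - 1 ≤ ∑ v, c (∑ v, lam v ^ a + 1) v := by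
  set K := ∑ v, lam v ^ a + 1
  have hK : 0 < K :=
    add_pos_of_nonneg_of_pos (sum_nonneg fun v _ => Real.rpow_nonneg (hlam v) a) one_pos
  have hle (v : V) : lam v - lam v ^ a / K ≤ c K v := by
    obtain ⟨hmem, heq⟩ := hc K hK v
    have := Real.rpow_le_rpow hmem.1 hmem.2 ha.le
    have : c K v ^ a / K ≤ lam v ^ a / K := by gcongr
    linarith
  have : ∑ v, lam v ^ a / K ≤ 1 := by
    rw [← sum_div, div_le_one hK]
    linarith
  have := sum_le_sum fun v (_ : v ∈ Finset.univ) => hle v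
  rw [sum_sub_distrib] at this
  linarith

end IsRootFamily

theorem exists_gdrift_eq_self (ha : 0 < a) (hlam : ∀ v, 0 < lam v) (hS : 1 < ∑ v, lam v) :
    ∃ c : V → ℝ, (∀ v, 0 ≤ c v) ∧ ∑ v, c v = ∑ v, lam v - 1 ∧ gdrift a lam c = c := by
  obtain ⟨c, hc⟩ := exists_isRootFamily ha fun v => (hlam v).le
  have hlim : Tendsto (fun K => ∑ v, (K * lam v) ^ a⁻¹) (𝓝 0) (𝓝 0) := by
    have : Continuous fun K : ℝ => ∑ v, (K * lam v) ^ a⁻¹ := continuous_finsetSum _ fun v _ =>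
      (continuous_id.mul continuous_const).rpow_const fun _ => Or.inr (inv_nonneg.2 ha.le)
    simpa [Real.zero_rpow (inv_ne_zero ha.ne')] using this.tendsto 0
  have hK₂ : 0 < ∑ v, lam v ^ a + 1 :=
    add_pos_of_nonneg_of_pos (sum_nonneg fun v _ => Real.rpow_nonneg (hlam v).le a) one_pos
  obtain ⟨K₁, hK₁, hK₁S, hK₁₂⟩ := ((hlim.eventually (gt_mem_nhds (sub_pos.2 hS))).and
    (gt_mem_nhds hK₂)).exists_gt
  obtain ⟨K, hK, hGK⟩ := intermediate_value_Icc hK₁₂.le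
    (hc.continuousOn_sum ha (fun v => (hlam v).le) hK₁)
    ⟨(hc.sum_le ha hK₁).trans hK₁S.le, hc.sub_one_le_sum ha fun v => (hlam v).le⟩
  simp only at hGK
  have hK0 : 0 < K := hK₁.trans_le hK.1
  have hsum : ∑ v, c K v ^ a = K := by
    rw [sum_congr rfl fun v _ => hc.rpow_eq hK0 v, ← mul_sum, sum_sub_distrib, hGK]
    ring
  refine ⟨c K, fun v => (hc K hK0 v).1.1, hGK, funext fun v => ?_⟩
  rw [gdrift, hsum, hc.rpow_eq hK0 v, mul_div_cancel_left₀ _ hK0.ne']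
  ring

lemma isCGSolution_ray {c : V → ℝ} (hc : ∀ v, 0 ≤ c v) (hsum : ∑ v, c v = ∑ v, lam v - 1)
    (hfix : gdrift a lam c = c) : IsCGSolution a lam 0 fun t => t • c := by
  refine ⟨(continuous_id.smul continuous_const).continuousOn, zero_smul _ _,
    fun t ht v => mul_nonneg ht (hc v), fun t ht => ?_, fun t ht _ => ?_⟩
  · have : 0 ≤ ∑ v, lam v - 1 := hsum ▸ sum_nonneg fun v _ => hc v
    simpa [← mul_sum, hsum, mul_comm] using mul_nonneg ht this
  · rw [gdrift_smul ht hc, hfix]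
    simpa using (hasDerivAt_id t).smul_const c

end CompleteGraphIVP

open CompleteGraphIVP

theorem cgSolution_exists_general {V : Type*} [Fintype V]
    (a : ℝ) (ha : 0 < a) (lam : V → ℝ) (hlam : ∀ v, 0 < lam v)
    (q0 : V → ℝ) (hq0 : ∀ v, 0 ≤ q0 v) :
    ∃ f : ℝ → V → ℝ, IsCGSolution a lam q0 f := by
  rcases (sum_nonneg fun v _ => hq0 v).lt_or_eq with hs0 | hs0
  · exact exists_isCGSolution_of_sum_pos ha hlam hq0 hs0
  obtain rfl : q0 = 0 :=
    funext fun v => (sum_eq_zero_iff_of_nonneg fun v _ => hq0 v).1 hs0.symm v (mem_univ v)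
  rcases le_or_gt (∑ v, lam v) 1 with hS | hS
  · exact ⟨0, isCGSolution_zero hS⟩
  · obtain ⟨c, hc, hsum, hfix⟩ := exists_gdrift_eq_self ha hlam hS
    exact ⟨_, isCGSolution_ray hc hsum hfix⟩

/-- the complete-graph initial value problem has a solution for every
initial condition `q⁰ ∈ [0,∞)^V`. -/
theorem cgSolution_exists {V : Type*} [Fintype V] [Nonempty V]
    (a : ℝ) (ha : 0 < a) (lam : V → ℝ) (hlam : ∀ v, 0 < lam v)
    (q0 : V → ℝ) (hq0 : ∀ v, 0 ≤ q0 v) :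
    ∃ f : ℝ → V → ℝ, IsCGSolution a lam q0 f :=
  cgSolution_exists_general a ha lam hlam q0 hq0
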